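/- Fix 1/2 < s < 1, N ≥ 1, m as given, and a real constant C₅, and define M₈(ξ₁,…,ξ₈) := C₅ Σ_{{a,c,e,g}={1,3,5,7}, {b,d,f,h}={2,4,6,8}} (m_a m_b m_c m_{defgh} ξ_{ac−bdefgh} − m_{abcde} m_f m_g m_h ξ_{abcdeg−fh}) on the hyperplane ξ₁+⋯+ξ₈ = 0, where ξ_{ac−bdefgh} := ξ_a + ξ_c − ξ_b − ξ_d − ξ_e − ξ_f − ξ_g − ξ_h and ξ_{abcdeg−fh} := ξ_a + ξ_b + ξ_c + ξ_d + ξ_e + ξ_g − ξ_f − ξ_h. Then there is a constant C depending only on s and C₅ (not on N) such that whenever ξ₁+⋯+ξ₈ = 0 and N_soprano ≥ N: |M₈| ≤ C N^{−1} (1+N_soprano) m(ξ_soprano) (1+N_alto) m(ξ_alto). -/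
import Mathlib


open MeasureTheory Complex Real Set Finset

noncomputable section

/-- `m` is the symbol of the `I`-operator at level `N` and regularity `s`. -/
def IsIMultiplier (s N : ℝ) (m : ℝ → ℝ) : Prop :=
  ContDiff ℝ (⊤ : ℕ∞) m ∧
  (∀ ξ, m (-ξ) = m ξ) ∧
  (∀ ξ, 0 ≤ m ξ ∧ m ξ ≤ 1) ∧
  (∀ ξ η, |ξ| ≤ |η| → m η ≤ m ξ) ∧
  (∀ ξ, |ξ| ≤ N → m ξ = 1) ∧
  (∀ ξ, 2 * N ≤ |ξ| → m ξ = (|ξ| / N) ^ (s - 1))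

/-- Odd indices `1,3,5,7` (as `0,2,4,6` in `Fin 8`). -/
def od8 : Fin 4 → Fin 8 := ![0, 2, 4, 6]

/-- Even indices `2,4,6,8` (as `1,3,5,7` in `Fin 8`). -/
def ev8 : Fin 4 → Fin 8 := ![1, 3, 5, 7]

/-- The multiplier
`M₈ = C₅ Σ_{{a,c,e,g}={1,3,5,7},{b,d,f,h}={2,4,6,8}}
  (m_a m_b m_c m_{defgh} ξ_{ac-bdefgh} - m_{abcde} m_f m_g m_h ξ_{abcdeg-fh})`,
the sum over all assignments being realized as a sum over pairs of permutations of the odd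
and even index sets (with `a,c,e,g` and `b,d,f,h` the images of the odd resp. even indices). -/
def M8 (C₅ : ℝ) (m : ℝ → ℝ) (ξ : Fin 8 → ℝ) : ℝ :=
  C₅ * ∑ p : Equiv.Perm (Fin 4), ∑ q : Equiv.Perm (Fin 4),
    (m (ξ (od8 (p 0))) * m (ξ (ev8 (q 0))) * m (ξ (od8 (p 1)))
        * m (ξ (ev8 (q 1)) + ξ (od8 (p 2)) + ξ (ev8 (q 2)) + ξ (od8 (p 3)) + ξ (ev8 (q 3)))
        * (ξ (od8 (p 0)) + ξ (od8 (p 1)) - ξ (ev8 (q 0)) - ξ (ev8 (q 1)) - ξ (od8 (p 2))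
            - ξ (ev8 (q 2)) - ξ (od8 (p 3)) - ξ (ev8 (q 3)))
      - m (ξ (od8 (p 0)) + ξ (ev8 (q 0)) + ξ (od8 (p 1)) + ξ (ev8 (q 1)) + ξ (od8 (p 2)))
        * m (ξ (ev8 (q 2))) * m (ξ (od8 (p 3))) * m (ξ (ev8 (q 3)))
        * (ξ (od8 (p 0)) + ξ (ev8 (q 0)) + ξ (od8 (p 1)) + ξ (ev8 (q 1)) + ξ (od8 (p 2))
            + ξ (od8 (p 3)) - ξ (ev8 (q 2)) - ξ (ev8 (q 3))))

lemma abs_four_mul_le {m : ℝ → ℝ} (hm1 : ∀ x, |m x| ≤ 1) (x1 x2 x3 x4 L K : ℝ)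
    (hK : 0 ≤ K) (hL : |L| ≤ 8 * K) :
    |m x1 * m x2 * m x3 * m x4 * L| ≤ 8 * K := by
  calc |m x1 * m x2 * m x3 * m x4 * L|
      = |m x1| * |m x2| * |m x3| * |m x4| * |L| := by
        rw [abs_mul, abs_mul, abs_mul, abs_mul]
    _ ≤ 1 * 1 * 1 * 1 * (8 * K) := by
        gcongr <;> first | exact hm1 _ | exact hL
    _ = 8 * K := by ring

lemma M8_term_le (m : ℝ → ℝ) (hm1 : ∀ x, |m x| ≤ 1) (ξ : Fin 8 → ℝ) (K : ℝ)
    (hK : ∀ i, |ξ i| ≤ K) (p q : Equiv.Perm (Fin 4)) :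
    |m (ξ (od8 (p 0))) * m (ξ (ev8 (q 0))) * m (ξ (od8 (p 1)))
        * m (ξ (ev8 (q 1)) + ξ (od8 (p 2)) + ξ (ev8 (q 2)) + ξ (od8 (p 3)) + ξ (ev8 (q 3)))
        * (ξ (od8 (p 0)) + ξ (od8 (p 1)) - ξ (ev8 (q 0)) - ξ (ev8 (q 1)) - ξ (od8 (p 2))
            - ξ (ev8 (q 2)) - ξ (od8 (p 3)) - ξ (ev8 (q 3)))
      - m (ξ (od8 (p 0)) + ξ (ev8 (q 0)) + ξ (od8 (p 1)) + ξ (ev8 (q 1)) + ξ (od8 (p 2)))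
        * m (ξ (ev8 (q 2))) * m (ξ (od8 (p 3))) * m (ξ (ev8 (q 3)))
        * (ξ (od8 (p 0)) + ξ (ev8 (q 0)) + ξ (od8 (p 1)) + ξ (ev8 (q 1)) + ξ (od8 (p 2))
            + ξ (od8 (p 3)) - ξ (ev8 (q 2)) - ξ (ev8 (q 3)))| ≤ 16 * K := by
  have hK0 : 0 ≤ K := le_trans (abs_nonneg _) (hK 0)
  obtain ⟨o0l, o0r⟩ := abs_le.mp (hK (od8 (p 0)))
  obtain ⟨o1l, o1r⟩ := abs_le.mp (hK (od8 (p 1)))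
  obtain ⟨o2l, o2r⟩ := abs_le.mp (hK (od8 (p 2)))
  obtain ⟨o3l, o3r⟩ := abs_le.mp (hK (od8 (p 3)))
  obtain ⟨e0l, e0r⟩ := abs_le.mp (hK (ev8 (q 0)))
  obtain ⟨e1l, e1r⟩ := abs_le.mp (hK (ev8 (q 1)))
  obtain ⟨e2l, e2r⟩ := abs_le.mp (hK (ev8 (q 2)))
  obtain ⟨e3l, e3r⟩ := abs_le.mp (hK (ev8 (q 3)))
  have h1 : |ξ (od8 (p 0)) + ξ (od8 (p 1)) - ξ (ev8 (q 0)) - ξ (ev8 (q 1)) - ξ (od8 (p 2))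
      - ξ (ev8 (q 2)) - ξ (od8 (p 3)) - ξ (ev8 (q 3))| ≤ 8 * K := by
    rw [abs_le]; constructor <;> linarith
  have h2 : |ξ (od8 (p 0)) + ξ (ev8 (q 0)) + ξ (od8 (p 1)) + ξ (ev8 (q 1)) + ξ (od8 (p 2))
      + ξ (od8 (p 3)) - ξ (ev8 (q 2)) - ξ (ev8 (q 3))| ≤ 8 * K := by
    rw [abs_le]; constructor <;> linarith
  calc |_ - _| ≤ _ + _ := abs_sub _ _
    _ ≤ 8 * K + 8 * K :=
        add_le_add (abs_four_mul_le hm1 _ _ _ _ _ _ hK0 h1)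
          (abs_four_mul_le hm1 _ _ _ _ _ _ hK0 h2)
    _ = 16 * K := by ring

lemma m_lower (s N : ℝ) (hs : 1 / 2 < s) (hs1 : s < 1) (hN : 1 ≤ N) (m : ℝ → ℝ)
    (hm : IsIMultiplier s N m) (x : ℝ) (hx : N ≤ |x|) :
    1 / 2 * (|x| / N) ^ (s - 1) ≤ m x := by
  obtain ⟨-, -, -, hmono, -, hhigh⟩ := hm
  have hN0 : (0:ℝ) < N := lt_of_lt_of_le one_pos hN
  have hr1 : 1 ≤ |x| / N := (one_le_div hN0).mpr hx
  have hr0 : 0 < |x| / N := lt_of_lt_of_le one_pos hr1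
  rcases le_or_gt (2 * N) (|x|) with h | h
  · rw [hhigh x h]
    nlinarith [Real.rpow_pos_of_pos hr0 (s - 1)]
  · have h2N : m (2 * N) ≤ m x := hmono _ _ (by rw [abs_of_pos (show (0:ℝ) < 2*N by positivity)]; exact h.le)
    have hm2N : m (2 * N) = (2:ℝ) ^ (s - 1) := by
      rw [hhigh (2 * N) (by rw [abs_of_pos (by positivity)]),
        abs_of_pos (by positivity : (0:ℝ) < 2 * N)]
      congr 1
      field_simp
    have h2inv : (2:ℝ) ^ (-1:ℝ) = 1 / 2 := by
      rw [Real.rpow_neg (by norm_num), Real.rpow_one]; norm_num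
    have h2 : (1:ℝ) / 2 ≤ (2:ℝ) ^ (s - 1) := by
      rw [← h2inv]
      exact Real.rpow_le_rpow_of_exponent_le (by norm_num) (by linarith)
    have hle1 : (|x| / N) ^ (s - 1) ≤ 1 :=
      Real.rpow_le_one_of_one_le_of_nonpos hr1 (by linarith)
    nlinarith

lemma final_ineq (s N K L a b : ℝ) (hs : 1 / 2 < s) (hs1 : s < 1) (hN : 1 ≤ N)
    (hNs : N ≤ K) (hKL : K ≤ 7 * L) (hL0 : 0 ≤ L) (hab : a ≤ b) (ha0 : 0 ≤ a)
    (hP : 1 / 2 * (K / N) ^ (s - 1) ≤ a) :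
    K ≤ 28 * (N⁻¹ * ((1 + K) * a * ((1 + L) * b))) := by
  have hN0 : (0:ℝ) < N := lt_of_lt_of_le one_pos hN
  have hK0 : (0:ℝ) ≤ K := le_trans hN0.le hNs
  have hr1 : 1 ≤ K / N := (one_le_div hN0).mpr hNs
  have hr0 : 0 < K / N := lt_of_lt_of_le one_pos hr1
  have hPpos : 0 < (K / N) ^ (s - 1) := Real.rpow_pos_of_pos hr0 _
  have e1 : K * (1 / 2 * (K / N) ^ (s - 1)) * (K / 7 * (1 / 2 * (K / N) ^ (s - 1)))
      ≤ (1 + K) * a * ((1 + L) * b) := by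
    have hb : 1 / 2 * (K / N) ^ (s - 1) ≤ b := le_trans hP hab
    gcongr <;> linarith
  have e3 : (K / N) ^ (s - 1) * (K / N) ^ (s - 1) = (K / N) ^ (2 * s - 2) := by
    rw [← Real.rpow_add hr0]; congr 1; ring
  have e5 : (K / N) * (K / N) ^ (2 * s - 2) = (K / N) ^ (2 * s - 1) := by
    have h := Real.rpow_add hr0 1 (2 * s - 2)
    rw [Real.rpow_one] at h
    rw [← h]; congr 1; ring
  have e6 : 1 ≤ (K / N) ^ (2 * s - 1) := by
    calc (1:ℝ) = (K / N) ^ (0:ℝ) := (Real.rpow_zero _).symm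
      _ ≤ (K / N) ^ (2 * s - 1) :=
        Real.rpow_le_rpow_of_exponent_le hr1 (by linarith)
  have e1' : K / 28 * ((K / N) * ((K / N) ^ (s - 1) * (K / N) ^ (s - 1)))
      ≤ N⁻¹ * ((1 + K) * a * ((1 + L) * b)) := by
    have := mul_le_mul_of_nonneg_left e1 (by positivity : (0:ℝ) ≤ N⁻¹)
    calc K / 28 * ((K / N) * ((K / N) ^ (s - 1) * (K / N) ^ (s - 1)))
        = N⁻¹ * (K * (1 / 2 * (K / N) ^ (s - 1)) *
            (K / 7 * (1 / 2 * (K / N) ^ (s - 1)))) := by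
          field_simp
          ring
      _ ≤ _ := this
  have e2 : K / 28 * ((K / N) * ((K / N) ^ (s - 1) * (K / N) ^ (s - 1)))
      = K / 28 * (K / N) ^ (2 * s - 1) := by rw [e3, e5]
  nlinarith [e1', e6, hK0]

/-- Pointwise bound for `M₈` on the hyperplane `ξ₁+⋯+ξ₈ = 0`.  Here `σ` sorts the
frequencies by decreasing magnitude, so `ξ(σ 0)` and `ξ(σ 1)` are the soprano and alto
frequencies.  If `N_soprano ≥ N` then
`|M₈| ≤ C N⁻¹ (1+N_soprano) m(ξ_soprano) (1+N_alto) m(ξ_alto)`, with `C` depending only on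
`s` and `C₅` (not on `N`). -/
theorem M8_pointwise_bound (s C₅ : ℝ) (hs : 1 / 2 < s) (hs1 : s < 1) :
    ∃ C : ℝ, 0 < C ∧
      ∀ N : ℝ, 1 ≤ N → ∀ m : ℝ → ℝ, IsIMultiplier s N m →
        ∀ ξ : Fin 8 → ℝ, (∑ i, ξ i) = 0 →
          ∀ σ : Equiv.Perm (Fin 8), (∀ i j : Fin 8, i ≤ j → |ξ (σ j)| ≤ |ξ (σ i)|) →
            N ≤ |ξ (σ 0)| →
            |M8 C₅ m ξ|
              ≤ C * N ^ (-(1 : ℝ))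
                  * ((1 + |ξ (σ 0)|) * m (ξ (σ 0)) * ((1 + |ξ (σ 1)|) * m (ξ (σ 1)))) := by
  refine ⟨258048 * (1 + |C₅|), by positivity, ?_⟩
  intro N hN m hm ξ hsum8 σ hσ hNs
  have hN0 : (0:ℝ) < N := lt_of_lt_of_le one_pos hN
  obtain ⟨hsm, hev, hrange, hmono, hlow, hhigh⟩ := hm
  have hm1 : ∀ x, |m x| ≤ 1 := fun x =>
    abs_le.mpr ⟨by linarith [(hrange x).1], (hrange x).2⟩
  have hbound : ∀ i, |ξ i| ≤ |ξ (σ 0)| := fun i => by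
    simpa using hσ 0 (σ.symm i) (Fin.zero_le _)
  -- naive bound on M8
  have hM8 : |M8 C₅ m ξ| ≤ |C₅| * (9216 * |ξ (σ 0)|) := by
    have hc : (Finset.univ : Finset (Equiv.Perm (Fin 4))).card = 24 := by
      simp [Fintype.card_perm, Nat.factorial]
    rw [M8, abs_mul]
    gcongr
    calc |∑ p : Equiv.Perm (Fin 4), ∑ q : Equiv.Perm (Fin 4), _|
        ≤ ∑ p : Equiv.Perm (Fin 4), |∑ q : Equiv.Perm (Fin 4), _| :=
          Finset.abs_sum_le_sum_abs _ _
      _ ≤ ∑ _p : Equiv.Perm (Fin 4), ∑ _q : Equiv.Perm (Fin 4), (16 * |ξ (σ 0)|) := by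
          refine Finset.sum_le_sum fun p _ => ?_
          refine le_trans (Finset.abs_sum_le_sum_abs _ _) ?_
          exact Finset.sum_le_sum fun q _ => M8_term_le m hm1 ξ _ hbound p q
      _ = 9216 * |ξ (σ 0)| := by
          rw [Finset.sum_const, Finset.sum_const, hc]
          simp [nsmul_eq_mul]; ring
  -- second largest controls the largest
  have hKL : |ξ (σ 0)| ≤ 7 * |ξ (σ 1)| := by
    have h0 : ξ (σ 0) + ξ (σ 1) + ξ (σ 2) + ξ (σ 3) + ξ (σ 4) + ξ (σ 5) + ξ (σ 6)
        + ξ (σ 7) = 0 := by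
      have := Equiv.sum_comp σ ξ
      rw [Fin.sum_univ_eight] at this
      rw [this]; exact hsum8
    have b2 := abs_le.mp (hσ 1 2 (by decide))
    have b3 := abs_le.mp (hσ 1 3 (by decide))
    have b4 := abs_le.mp (hσ 1 4 (by decide))
    have b5 := abs_le.mp (hσ 1 5 (by decide))
    have b6 := abs_le.mp (hσ 1 6 (by decide))
    have b7 := abs_le.mp (hσ 1 7 (by decide))
    have b1 : |ξ (σ 1)| ≤ |ξ (σ 1)| := le_refl _
    obtain ⟨b1l, b1r⟩ := abs_le.mp b1
    rw [abs_le]; constructor <;> linarith [b2.1, b2.2, b3.1, b3.2, b4.1, b4.2, b5.1, b5.2,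
      b6.1, b6.2, b7.1, b7.2]
  have hab : m (ξ (σ 0)) ≤ m (ξ (σ 1)) := hmono _ _ (hσ 0 1 (by decide))
  have ha0 : 0 ≤ m (ξ (σ 0)) := (hrange _).1
  have hb0 : 0 ≤ m (ξ (σ 1)) := (hrange _).1
  have hP : 1 / 2 * (|ξ (σ 0)| / N) ^ (s - 1) ≤ m (ξ (σ 0)) :=
    m_lower s N hs hs1 hN m ⟨hsm, hev, hrange, hmono, hlow, hhigh⟩ (ξ (σ 0)) hNs
  have key := final_ineq s N (|ξ (σ 0)|) (|ξ (σ 1)|) (m (ξ (σ 0))) (m (ξ (σ 1)))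
    hs hs1 hN hNs hKL (abs_nonneg _) hab ha0 hP
  have hrpow : N ^ (-(1:ℝ)) = N⁻¹ := by rw [Real.rpow_neg hN0.le, Real.rpow_one]
  have hρ : 0 ≤ (1 + |ξ (σ 0)|) * m (ξ (σ 0)) * ((1 + |ξ (σ 1)|) * m (ξ (σ 1))) := by
    have h1 : (0:ℝ) ≤ 1 + |ξ (σ 0)| := by positivity
    have h2 : (0:ℝ) ≤ 1 + |ξ (σ 1)| := by positivity
    exact mul_nonneg (mul_nonneg h1 ha0) (mul_nonneg h2 hb0)
  rw [hrpow]
  calc |M8 C₅ m ξ| ≤ |C₅| * (9216 * |ξ (σ 0)|) := hM8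
    _ ≤ |C₅| * (9216 * (28 * (N⁻¹ *
          ((1 + |ξ (σ 0)|) * m (ξ (σ 0)) * ((1 + |ξ (σ 1)|) * m (ξ (σ 1))))))) := by
        gcongr
    _ ≤ (1 + |C₅|) * (9216 * (28 * (N⁻¹ *
          ((1 + |ξ (σ 0)|) * m (ξ (σ 0)) * ((1 + |ξ (σ 1)|) * m (ξ (σ 1))))))) := by
        have hnn : (0:ℝ) ≤ 9216 * (28 * (N⁻¹ *
            ((1 + |ξ (σ 0)|) * m (ξ (σ 0)) * ((1 + |ξ (σ 1)|) * m (ξ (σ 1)))))) := by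
          have : (0:ℝ) ≤ N⁻¹ := by positivity
          positivity
        nlinarith [abs_nonneg C₅]
    _ = 258048 * (1 + |C₅|) * N⁻¹ *
          ((1 + |ξ (σ 0)|) * m (ξ (σ 0)) * ((1 + |ξ (σ 1)|) * m (ξ (σ 1)))) := by ring
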